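/- arXiv:2408.10068 — 3 statements merged into one kernel-verified Lean document; each statement's English description precedes it below -/
import Mathlib

section
/- Let B be a probability measure on ℝ that has an analytic density in a neighborhood of x ∈ ℝ (i.e., B restricted to an open interval around x has a density extending to a holomorphic function on a complex neighborhood of x). Then the Stieltjes transform m_B is bounded on {z ∈ ℂ⁺ : |z - x| ≤ ε} for some ε > 0. -/
open MeasureTheory Complex Set

open scoped NNReal

/-!
Near `x` the measure has density `g = (Re f)⁺`, which is Lipschitz on a compact interval
`[a, b]` around `x` because `f` is analytic there. Split `m_B(z)` into the integrals over
`(a, b)` and over its complement. Off `(a, b)` the kernel `1 / (t - z)` is bounded once `z` is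
close to `x`. On `(a, b)`, subtracting `g (Re z)` from the density leaves an integrand bounded
by the Lipschitz constant, and the constant `g (Re z)` multiplies
`∫ dt / (t - z) = log (b - z) - log (a - z)`, which stays bounded: the moduli of `b - z` and
`a - z` stay away from `0` and `∞`, and arguments lie in `[-π, π]`.
-/

namespace Complex

variable {z : ℂ}

lemma abs_im_le_norm_ofReal_sub (t : ℝ) (z : ℂ) : |z.im| ≤ ‖(t : ℂ) - z‖ := by
  simpa using abs_im_le_norm ((t : ℂ) - z)

lemma abs_sub_re_le_norm_ofReal_sub (t : ℝ) (z : ℂ) : |t - z.re| ≤ ‖(t : ℂ) - z‖ := by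
  simpa using abs_re_le_norm ((t : ℂ) - z)

lemma ofReal_sub_ne_zero_of_im_ne_zero (hz : z.im ≠ 0) (t : ℝ) : (t : ℂ) - z ≠ 0 :=
  norm_pos_iff.1 ((abs_pos.2 hz).trans_le (abs_im_le_norm_ofReal_sub t z))

lemma continuous_one_div_ofReal_sub (hz : z.im ≠ 0) :
    Continuous fun t : ℝ => 1 / ((t : ℂ) - z) :=
  continuous_const.div (by fun_prop) (ofReal_sub_ne_zero_of_im_ne_zero hz)

lemma integrable_one_div_ofReal_sub (μ : Measure ℝ) [IsFiniteMeasure μ] (hz : z.im ≠ 0) :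
    Integrable (fun t : ℝ => 1 / ((t : ℂ) - z)) μ := by
  refine .mono' (integrable_const |z.im|⁻¹)
    (continuous_one_div_ofReal_sub hz).aestronglyMeasurable (ae_of_all _ fun t => ?_)
  rw [norm_div, norm_one, one_div]
  exact inv_anti₀ (abs_pos.2 hz) (abs_im_le_norm_ofReal_sub t z)

lemma integral_one_div_ofReal_sub (hz : z.im ≠ 0) (a b : ℝ) :
    ∫ t in a..b, 1 / ((t : ℂ) - z) = log (b - z) - log (a - z) := by
  refine intervalIntegral.integral_eq_sub_of_hasDerivAt (f := fun t : ℝ => log (t - z))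
    (fun t _ => ?_) ((continuous_one_div_ofReal_sub hz).intervalIntegrable a b)
  have hslit : (t : ℂ) - z ∈ slitPlane := Or.inr (by simpa using hz)
  simpa [one_div] using (((hasDerivAt_id (t : ℂ)).sub_const z).clog hslit).comp_ofReal

lemma norm_log_sub_log_le {w₁ w₂ : ℂ} {r R : ℝ} (hr : 0 < r) (hw₁ : ‖w₁‖ ∈ Icc r R)
    (hw₂ : ‖w₂‖ ∈ Icc r R) :
    ‖log w₁ - log w₂‖ ≤ Real.log R - Real.log r + 2 * Real.pi := by
  have hlog : ∀ {w : ℂ}, ‖w‖ ∈ Icc r R → Real.log ‖w‖ ∈ Icc (Real.log r) (Real.log R) :=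
    fun hw => ⟨Real.log_le_log hr hw.1, Real.log_le_log (hr.trans_le hw.1) hw.2⟩
  have hre : |(log w₁ - log w₂).re| ≤ Real.log R - Real.log r := by
    rw [sub_re, log_re, log_re]
    exact abs_sub_le_of_le_of_le (hlog hw₁).1 (hlog hw₁).2 (hlog hw₂).1 (hlog hw₂).2
  have him : |(log w₁ - log w₂).im| ≤ 2 * Real.pi := by
    rw [sub_im, log_im, log_im, two_mul]
    exact (abs_sub _ _).trans (add_le_add (abs_arg_le_pi w₁) (abs_arg_le_pi w₂))
  exact (norm_le_abs_re_add_abs_im _).trans (add_le_add hre him)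

lemma abs_sub_sub_norm_sub_le_norm_ofReal_sub (t x : ℝ) (z : ℂ) :
    |t - x| - ‖z - x‖ ≤ ‖(t : ℂ) - z‖ := by
  have h := norm_sub_norm_le ((t : ℂ) - x) (z - x)
  rwa [sub_sub_sub_cancel_right, ← ofReal_sub, norm_real, Real.norm_eq_abs] at h

lemma norm_ofReal_sub_le_abs_sub_add_norm_sub (t x : ℝ) (z : ℂ) :
    ‖(t : ℂ) - z‖ ≤ |t - x| + ‖z - x‖ := by
  have h := norm_sub_le_norm_sub_add_norm_sub (t : ℂ) x z
  rwa [← ofReal_sub, norm_real, Real.norm_eq_abs, norm_sub_rev (x : ℂ) z] at h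

lemma norm_setIntegral_one_div_ofReal_sub_le {μ : Measure ℝ} [IsFiniteMeasure μ] {s : Set ℝ}
    {r : ℝ} (hr : 0 < r) (hs : ∀ t ∈ s, r ≤ ‖(t : ℂ) - z‖) :
    ‖∫ t in s, 1 / ((t : ℂ) - z) ∂μ‖ ≤ r⁻¹ * μ.real s :=
  norm_setIntegral_le_of_norm_le_const (measure_lt_top μ s) fun t ht => by
    rw [norm_div, norm_one, one_div]
    exact inv_anti₀ hr (hs t ht)

lemma norm_intervalIntegral_smul_one_div_ofReal_sub_le {g : ℝ → ℝ} {K : ℝ≥0} {a b r R : ℝ}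
    (hab : a ≤ b) (hg : LipschitzOnWith K g (Icc a b)) (hz : z.im ≠ 0)
    (hzre : z.re ∈ Icc a b) (hr : 0 < r) (ha : ‖(a : ℂ) - z‖ ∈ Icc r R)
    (hb : ‖(b : ℂ) - z‖ ∈ Icc r R) :
    ‖∫ t in a..b, g t • (1 / ((t : ℂ) - z))‖ ≤
      K * (b - a) + |g z.re| * (Real.log R - Real.log r + 2 * Real.pi) := by
  set h : ℝ → ℂ := fun t => 1 / ((t : ℂ) - z)
  have hh : Continuous h := continuous_one_div_ofReal_sub hz
  have hg_int : IntervalIntegrable (fun t => (g t - g z.re) • h t) volume a b :=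
    ((hg.continuousOn.sub continuousOn_const).smul hh.continuousOn).intervalIntegrable_of_Icc hab
  have hconst : ∫ t in a..b, g z.re • h t = g z.re • (log (b - z) - log (a - z)) := by
    rw [intervalIntegral.integral_smul, integral_one_div_ofReal_sub hz]
  have hdecomp : ∫ t in a..b, g t • h t =
      (∫ t in a..b, (g t - g z.re) • h t) + ∫ t in a..b, g z.re • h t := by
    have hc_int : IntervalIntegrable (fun t => g z.re • h t) volume a b :=
      (hh.const_smul (g z.re)).intervalIntegrable a b
    rw [← intervalIntegral.integral_add hg_int hc_int]
    simp only [← add_smul, sub_add_cancel]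
  have hlip_part : ‖∫ t in a..b, (g t - g z.re) • h t‖ ≤ K * (b - a) := by
    refine (intervalIntegral.norm_integral_le_of_norm_le_const fun t ht => ?_).trans_eq
      (by rw [abs_of_nonneg (sub_nonneg.2 hab)])
    have ht' : t ∈ Icc a b := Ioc_subset_Icc_self (uIoc_of_le hab ▸ ht)
    have hpos : 0 < ‖(t : ℂ) - z‖ := norm_pos_iff.2 (ofReal_sub_ne_zero_of_im_ne_zero hz t)
    calc ‖(g t - g z.re) • h t‖ = |g t - g z.re| / ‖(t : ℂ) - z‖ := by
          simp only [h, norm_smul, Real.norm_eq_abs, norm_div, norm_one, mul_one_div]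
      _ ≤ K * ‖(t : ℂ) - z‖ / ‖(t : ℂ) - z‖ := by
          gcongr
          simpa [Real.dist_eq] using (hg.dist_le_mul t ht' z.re hzre).trans
            (mul_le_mul_of_nonneg_left (abs_sub_re_le_norm_ofReal_sub t z) K.coe_nonneg)
      _ = K := mul_div_cancel_right₀ _ hpos.ne'
  rw [hdecomp, hconst]
  refine (norm_add_le _ _).trans (add_le_add hlip_part ?_)
  rw [norm_smul, Real.norm_eq_abs]
  exact mul_le_mul_of_nonneg_left (norm_log_sub_log_le hr hb ha) (abs_nonneg _)

end Complex

lemma setIntegral_Ioo_eq_intervalIntegral_of_restrict_eq_withDensity {E : Type*}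
    [NormedAddCommGroup E] [NormedSpace ℝ E] {B : Measure ℝ} {g : ℝ → ℝ} {a b : ℝ} (hab : a ≤ b)
    (hg : ContinuousOn g (Ioo a b))
    (hB : B.restrict (Ioo a b) =
      (volume.withDensity fun t => ENNReal.ofReal (g t)).restrict (Ioo a b)) (h : ℝ → E) :
    ∫ t in Ioo a b, h t ∂B = ∫ t in a..b, max (g t) 0 • h t := by
  have hmeas : AEMeasurable (fun t => ENNReal.ofReal (g t)) (volume.restrict (Ioo a b)) :=
    (ENNReal.continuous_ofReal.comp_continuousOn hg).aemeasurable measurableSet_Ioo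
  rw [hB, setIntegral_withDensity_eq_setIntegral_toReal_smul₀ hmeas
    (ae_of_all _ fun _ => ENNReal.ofReal_lt_top) h measurableSet_Ioo,
    intervalIntegral.integral_of_le hab, integral_Ioc_eq_integral_Ioo]
  simp only [ENNReal.toReal_ofReal']

noncomputable def stieltjesTransform (μ : Measure ℝ) (z : ℂ) : ℂ :=
  ∫ t, 1 / ((t : ℂ) - z) ∂μ

theorem exists_bound_stieltjesTransform_of_lipschitzOnWith_density (B : Measure ℝ)
    [IsFiniteMeasure B] {g : ℝ → ℝ} {K : ℝ≥0} {x δ : ℝ} (hδ : 0 < δ)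
    (hg : LipschitzOnWith K g (Icc (x - δ) (x + δ)))
    (hB : B.restrict (Ioo (x - δ) (x + δ)) =
      (volume.withDensity fun t => ENNReal.ofReal (g t)).restrict (Ioo (x - δ) (x + δ))) :
    ∃ ε > 0, ∃ C : ℝ, ∀ z : ℂ, z.im ≠ 0 → ‖z - x‖ ≤ ε → ‖stieltjesTransform B z‖ ≤ C := by
  set gp : ℝ → ℝ := fun t => max (g t) 0
  have hgp : LipschitzOnWith K gp (Icc (x - δ) (x + δ)) := by
    simpa [gp, Function.comp_def] using (LipschitzWith.id.max_const 0).comp_lipschitzOnWith hg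
  set L := Real.log (3 * δ / 2) - Real.log (δ / 2) + 2 * Real.pi
  have hL : 0 ≤ L := by
    have := Real.log_le_log (by positivity : 0 < δ / 2) (by linarith : δ / 2 ≤ 3 * δ / 2)
    have := Real.pi_pos
    linarith
  refine ⟨δ / 2, by positivity,
    K * (2 * δ) + (|gp x| + K * (δ / 2)) * L + (δ / 2)⁻¹ * B.real univ, fun z hz hzx => ?_⟩
  have hlower := fun t => abs_sub_sub_norm_sub_le_norm_ofReal_sub t x z
  have hupper := fun t => norm_ofReal_sub_le_abs_sub_add_norm_sub t x z
  have hre : |z.re - x| ≤ δ / 2 := by simpa using (abs_re_le_norm (z - x)).trans hzx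
  have hzre : z.re ∈ Icc (x - δ) (x + δ) := by
    constructor <;> linarith [abs_le.1 hre]
  have hgz : |gp z.re| ≤ |gp x| + K * (δ / 2) := by
    have := hgp.dist_le_mul z.re hzre x ⟨by linarith, by linarith⟩
    rw [Real.dist_eq, Real.dist_eq] at this
    linarith [abs_sub_abs_le_abs_sub (gp z.re) (gp x), mul_le_mul_of_nonneg_left hre K.coe_nonneg]
  have hnear : ‖∫ t in Ioo (x - δ) (x + δ), 1 / ((t : ℂ) - z) ∂B‖ ≤
      K * (2 * δ) + (|gp x| + K * (δ / 2)) * L := by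
    rw [setIntegral_Ioo_eq_intervalIntegral_of_restrict_eq_withDensity (by linarith)
      (hg.continuousOn.mono Ioo_subset_Icc_self) hB]
    have hend : ∀ t : ℝ, |t - x| = δ → ‖(t : ℂ) - z‖ ∈ Icc (δ / 2) (3 * δ / 2) := fun t ht =>
      ⟨by linarith [hlower t], by linarith [hupper t]⟩
    refine (norm_intervalIntegral_smul_one_div_ofReal_sub_le (by linarith) hgp hz hzre
      (by positivity) (hend _ (by simp [abs_of_pos hδ])) (hend _ (by simp [abs_of_pos hδ]))).trans
      ?_
    rw [show x + δ - (x - δ) = 2 * δ by ring]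
    gcongr
  have hfar : ‖∫ t in (Ioo (x - δ) (x + δ))ᶜ, 1 / ((t : ℂ) - z) ∂B‖ ≤
      (δ / 2)⁻¹ * B.real univ := by
    refine (norm_setIntegral_one_div_ofReal_sub_le (by positivity) fun t ht => ?_).trans
      (mul_le_mul_of_nonneg_left (measureReal_mono (subset_univ _)) (by positivity))
    simp only [mem_compl_iff, mem_Ioo, not_and_or, not_lt] at ht
    rcases ht with ht | ht <;> linarith [hlower t, le_abs_self (t - x), neg_abs_le (t - x)]
  rw [stieltjesTransform, ← integral_add_compl measurableSet_Ioo
    (integrable_one_div_ofReal_sub B hz)]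
  exact (norm_add_le _ _).trans (add_le_add hnear hfar)

theorem stieltjes_bounded_of_analytic_density
    (B : Measure ℝ) [IsProbabilityMeasure B] (x : ℝ)
    (δ : ℝ) (hδ : 0 < δ) (f : ℂ → ℂ)
    (hf : AnalyticOn ℂ f (Metric.ball (x : ℂ) δ))
    (hdens : B.restrict (Set.Ioo (x - δ) (x + δ))
      = (MeasureTheory.volume.withDensity fun t : ℝ =>
          ENNReal.ofReal (f (t : ℂ)).re).restrict (Set.Ioo (x - δ) (x + δ))) :
    ∃ ε > 0, ∃ C : ℝ, ∀ z : ℂ, 0 < z.im → ‖z - x‖ ≤ ε →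
      ‖∫ t : ℝ, 1 / ((t : ℂ) - z) ∂B‖ ≤ C := by
  have hmaps : MapsTo (fun t : ℝ => (t : ℂ)) (Icc (x - δ / 2) (x + δ / 2))
      (Metric.ball (x : ℂ) δ) := fun t ht => by
      rw [Metric.mem_ball, dist_eq, ← ofReal_sub, norm_real, Real.norm_eq_abs]
      exact (abs_sub_le_iff.2 ⟨by linarith [ht.2], by linarith [ht.1]⟩).trans_lt
        (half_lt_self hδ)
  have hsmooth : ContDiffOn ℝ 1 (fun t : ℝ => (f t).re) (Icc (x - δ / 2) (x + δ / 2)) :=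
    reCLM.contDiff.comp_contDiffOn <|
      ((hf.contDiffOn Metric.isOpen_ball.uniqueDiffOn).restrict_scalars ℝ).comp
        ofRealCLM.contDiff.contDiffOn hmaps
  obtain ⟨K, hK⟩ := hsmooth.exists_lipschitzOnWith one_ne_zero (convex_Icc _ _) isCompact_Icc
  have hsub : Ioo (x - δ / 2) (x + δ / 2) ⊆ Ioo (x - δ) (x + δ) :=
    Ioo_subset_Ioo (by linarith) (by linarith)
  have hB : B.restrict (Ioo (x - δ / 2) (x + δ / 2)) = (volume.withDensity fun t : ℝ =>
      ENNReal.ofReal (f t).re).restrict (Ioo (x - δ / 2) (x + δ / 2)) := by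
    simpa only [Measure.restrict_restrict_of_subset hsub] using
      congrArg (·.restrict (Ioo (x - δ / 2) (x + δ / 2))) hdens
  obtain ⟨ε, hε, C, hC⟩ := exists_bound_stieltjesTransform_of_lipschitzOnWith_density B
    (half_pos hδ) hK hB
  exact ⟨ε, hε, C, fun z hz hzx => hC z hz.ne' hzx⟩
end

section
/- Let A, B be probability measures, γ > 0, h₁ < h₂ real numbers with h₁, h₂ ∉ supp(B), m_B(h_i) = ∫ 1/(τ - h_i) dB(τ), and -1/m_B(h_i) ∉ supp(A) whenever m_B(h_i) ≠ 0. Define x(h) = h + γ ∫ u/(1 + u m_B(h)) dA(u) and x'(h) = 1 - γ ∫ u²/(1+u m_B(h))² dA(u) · ∫ 1/(τ - h)² dB(τ). If x'(h₁) > 0 and x'(h₂) > 0, then x(h₁) < x(h₂). -/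
/-! The resolvent identities for `τ ↦ 1 / (τ - h)` and `u ↦ u / (1 + u m)` give
`x h₂ - x h₁ = (h₂ - h₁) (1 - γ I J)` with the cross integrals
`I = ∫ u² / ((1 + u m₁) (1 + u m₂)) dA` and `J = ∫ 1 / ((τ - h₁) (τ - h₂)) dB`.
By Cauchy–Schwarz in `L²(A)` and `L²(B)`, `(γ I J)² ≤ (1 - x' h₁) (1 - x' h₂) < 1`.
Points off the supports keep all denominators bounded away from zero, so every integral is finite. -/

open MeasureTheory

/-- The support of a measure on `ℝ`: points all of whose open neighborhoods have
positive measure. -/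
def measSupport (μ : Measure ℝ) : Set ℝ :=
  {y | ∀ U : Set ℝ, y ∈ U → IsOpen U → 0 < μ U}

theorem sq_integral_mul_le_integral_sq_mul_integral_sq {α : Type*} [MeasurableSpace α]
    {μ : Measure α} {f g : α → ℝ} (hf : MemLp f 2 μ) (hg : MemLp g 2 μ) :
    (∫ a, f a * g a ∂μ) ^ 2 ≤ (∫ a, f a ^ 2 ∂μ) * ∫ a, g a ^ 2 ∂μ := by
  have inner_toLp : ∀ {f g : α → ℝ} (hf : MemLp f 2 μ) (hg : MemLp g 2 μ),
      inner ℝ (hf.toLp f) (hg.toLp g) = ∫ a, f a * g a ∂μ := by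
    intro f g hf hg
    rw [L2.inner_def]
    refine integral_congr_ae ?_
    filter_upwards [hf.coeFn_toLp, hg.coeFn_toLp] with a hfa hga
    rw [Real.inner_apply, hfa, hga]
  simpa only [inner_toLp, sq] using real_inner_mul_inner_self_le (hf.toLp f) (hg.toLp g)

theorem integral_sub_eq_mul_integral {α : Type*} [MeasurableSpace α] {μ : Measure α}
    {f g k : α → ℝ} {c : ℝ} (hf : Integrable f μ) (hg : Integrable g μ)
    (hfg : ∀ᵐ a ∂μ, f a - g a = c * k a) :
    ∫ a, f a ∂μ - ∫ a, g a ∂μ = c * ∫ a, k a ∂μ := by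
  rw [← integral_sub hf hg, ← integral_const_mul]
  exact integral_congr_ae hfg

theorem mul_mul_lt_one_of_sq_le_mul {γ I J I₁ I₂ J₁ J₂ : ℝ} (hγ : 0 ≤ γ)
    (hI : I ^ 2 ≤ I₁ * I₂) (hJ : J ^ 2 ≤ J₁ * J₂)
    (hI₁ : 0 ≤ I₁) (hJ₁ : 0 ≤ J₁)
    (h₁ : γ * I₁ * J₁ < 1) (h₂ : γ * I₂ * J₂ < 1) :
    γ * I * J < 1 := by
  have hsq : (γ * I * J) ^ 2 ≤ (γ * I₁ * J₁) * (γ * I₂ * J₂) :=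
    calc (γ * I * J) ^ 2 = γ ^ 2 * (I ^ 2 * J ^ 2) := by ring
      _ ≤ γ ^ 2 * ((I₁ * I₂) * (J₁ * J₂)) := by gcongr; exact (sq_nonneg I).trans hI
      _ = (γ * I₁ * J₁) * (γ * I₂ * J₂) := by ring
  have hprod : (γ * I₁ * J₁) * (γ * I₂ * J₂) < 1 :=
    mul_lt_one_of_nonneg_of_lt_one_left (by positivity) h₁ h₂.le
  nlinarith

section MeasSupport

variable {μ : Measure ℝ} {h m : ℝ}

theorem exists_pos_ae_le_abs_sub_of_notMem_measSupport (hh : h ∉ measSupport μ) :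
    ∃ ε > 0, ∀ᵐ τ ∂μ, ε ≤ |τ - h| := by
  simp only [measSupport, Set.mem_ofPred_eq, not_forall, not_lt, nonpos_iff_eq_zero] at hh
  obtain ⟨U, hhU, hU, hμU⟩ := hh
  obtain ⟨ε, hε, hball⟩ := Metric.isOpen_iff.1 hU h hhU
  refine ⟨ε, hε, ?_⟩
  filter_upwards [measure_eq_zero_iff_ae_notMem.1 (measure_mono_null hball hμU)] with τ hτ
  simpa [Real.dist_eq] using hτ

theorem exists_pos_ae_le_abs_one_add_mul (hm : m ≠ 0 → -(1 / m) ∉ measSupport μ) :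
    ∃ c > 0, ∀ᵐ u ∂μ, c ≤ |1 + u * m| := by
  rcases eq_or_ne m 0 with rfl | hm0
  · exact ⟨1, one_pos, by simp⟩
  obtain ⟨ε, hε, hae⟩ := exists_pos_ae_le_abs_sub_of_notMem_measSupport (hm hm0)
  refine ⟨|m| * ε, by positivity, ?_⟩
  filter_upwards [hae] with u hu
  have : 1 + u * m = m * (u - -(1 / m)) := by field_simp; ring
  rw [this, abs_mul]
  gcongr

theorem memLp_two_one_div_sub [IsFiniteMeasure μ] (hh : h ∉ measSupport μ) :
    MemLp (fun τ => 1 / (τ - h)) 2 μ := by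
  obtain ⟨ε, hε, hae⟩ := exists_pos_ae_le_abs_sub_of_notMem_measSupport hh
  refine MemLp.of_bound (by fun_prop : Measurable _).aestronglyMeasurable (1 / ε) ?_
  filter_upwards [hae] with τ hτ
  rw [norm_div, norm_one, Real.norm_eq_abs]
  exact one_div_le_one_div_of_le hε hτ

theorem memLp_two_div_one_add_mul (hμ : MemLp (fun u => u) 2 μ)
    (hm : m ≠ 0 → -(1 / m) ∉ measSupport μ) :
    MemLp (fun u => u / (1 + u * m)) 2 μ := by
  obtain ⟨c, hc, hae⟩ := exists_pos_ae_le_abs_one_add_mul hm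
  refine (hμ.const_mul (1 / c)).of_le (by fun_prop : Measurable _).aestronglyMeasurable ?_
  filter_upwards [hae] with u hu
  simp only [Real.norm_eq_abs, abs_div, abs_mul, abs_of_pos (one_div_pos.2 hc)]
  rw [one_div_mul_eq_div]
  exact div_le_div_of_nonneg_left (abs_nonneg u) hc hu

theorem integral_one_div_sub_sub_integral_one_div_sub [IsFiniteMeasure μ] {h₁ h₂ : ℝ}
    (hs₁ : h₁ ∉ measSupport μ) (hs₂ : h₂ ∉ measSupport μ) :
    ∫ τ, 1 / (τ - h₂) ∂μ - ∫ τ, 1 / (τ - h₁) ∂μ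
      = (h₂ - h₁) * ∫ τ, 1 / (τ - h₁) * (1 / (τ - h₂)) ∂μ := by
  have hψ₁ := memLp_two_one_div_sub hs₁
  have hψ₂ := memLp_two_one_div_sub hs₂
  refine integral_sub_eq_mul_integral (hψ₂.integrable one_le_two) (hψ₁.integrable one_le_two) ?_
  obtain ⟨ε₁, hε₁, hae₁⟩ := exists_pos_ae_le_abs_sub_of_notMem_measSupport hs₁
  obtain ⟨ε₂, hε₂, hae₂⟩ := exists_pos_ae_le_abs_sub_of_notMem_measSupport hs₂
  filter_upwards [hae₁, hae₂] with τ hτ₁ hτ₂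
  have h₁ : τ - h₁ ≠ 0 := abs_pos.1 (hε₁.trans_le hτ₁)
  have h₂ : τ - h₂ ≠ 0 := abs_pos.1 (hε₂.trans_le hτ₂)
  field_simp
  ring

theorem integral_div_one_add_mul_sub_integral_div_one_add_mul [IsFiniteMeasure μ] {m₁ m₂ : ℝ}
    (hμ : MemLp (fun u => u) 2 μ)
    (hm₁ : m₁ ≠ 0 → -(1 / m₁) ∉ measSupport μ) (hm₂ : m₂ ≠ 0 → -(1 / m₂) ∉ measSupport μ) :
    ∫ u, u / (1 + u * m₂) ∂μ - ∫ u, u / (1 + u * m₁) ∂μ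
      = -(m₂ - m₁) * ∫ u, u / (1 + u * m₁) * (u / (1 + u * m₂)) ∂μ := by
  have hφ₁ := memLp_two_div_one_add_mul hμ hm₁
  have hφ₂ := memLp_two_div_one_add_mul hμ hm₂
  refine integral_sub_eq_mul_integral (hφ₂.integrable one_le_two) (hφ₁.integrable one_le_two) ?_
  obtain ⟨c₁, hc₁, hae₁⟩ := exists_pos_ae_le_abs_one_add_mul hm₁
  obtain ⟨c₂, hc₂, hae₂⟩ := exists_pos_ae_le_abs_one_add_mul hm₂
  filter_upwards [hae₁, hae₂] with u hu₁ hu₂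
  have h₁ : 1 + u * m₁ ≠ 0 := abs_pos.1 (hc₁.trans_le hu₁)
  have h₂ : 1 + u * m₂ ≠ 0 := abs_pos.1 (hc₂.trans_le hu₂)
  field_simp
  ring

end MeasSupport

theorem x_of_h_increasing
    (A B : Measure ℝ) [IsProbabilityMeasure A] [IsProbabilityMeasure B]
    (hmom : Integrable (fun u : ℝ => u ^ 2) A)
    (γ : ℝ) (hγ : 0 < γ) (h₁ h₂ : ℝ) (h12 : h₁ < h₂)
    (hs₁ : h₁ ∉ measSupport B) (hs₂ : h₂ ∉ measSupport B)
    (mB : ℝ → ℝ) (hmB : ∀ h, mB h = ∫ τ : ℝ, 1 / (τ - h) ∂B)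
    (hA₁ : mB h₁ ≠ 0 → -(1 / mB h₁) ∉ measSupport A)
    (hA₂ : mB h₂ ≠ 0 → -(1 / mB h₂) ∉ measSupport A)
    (x x' : ℝ → ℝ)
    (hx : ∀ h, x h = h + γ * ∫ u : ℝ, u / (1 + u * mB h) ∂A)
    (hx' : ∀ h, x' h = 1 - γ * (∫ u : ℝ, u ^ 2 / (1 + u * mB h) ^ 2 ∂A)
        * ∫ τ : ℝ, 1 / (τ - h) ^ 2 ∂B)
    (hp₁ : 0 < x' h₁) (hp₂ : 0 < x' h₂) :
    x h₁ < x h₂ := by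
  have hmomA : MemLp (fun u : ℝ => u) 2 A :=
    (memLp_two_iff_integrable_sq aestronglyMeasurable_id).2 hmom
  set I := ∫ u, u / (1 + u * mB h₁) * (u / (1 + u * mB h₂)) ∂A
  set J := ∫ τ, 1 / (τ - h₁) * (1 / (τ - h₂)) ∂B
  have hmB_sub : mB h₂ - mB h₁ = (h₂ - h₁) * J := by
    rw [hmB, hmB]
    exact integral_one_div_sub_sub_integral_one_div_sub hs₁ hs₂
  have hx_sub : x h₂ - x h₁ = (h₂ - h₁) * (1 - γ * I * J) := by
    rw [hx, hx]
    linear_combination γ * integral_div_one_add_mul_sub_integral_div_one_add_mul hmomA hA₁ hA₂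
      - γ * I * hmB_sub
  have hI := sq_integral_mul_le_integral_sq_mul_integral_sq
    (memLp_two_div_one_add_mul hmomA hA₁) (memLp_two_div_one_add_mul hmomA hA₂)
  have hJ := sq_integral_mul_le_integral_sq_mul_integral_sq
    (memLp_two_one_div_sub hs₁) (memLp_two_one_div_sub hs₂)
  simp only [div_pow, one_pow] at hI hJ
  rw [hx'] at hp₁ hp₂
  have hIJ : γ * I * J < 1 :=
    mul_mul_lt_one_of_sq_le_mul hγ.le hI hJ (integral_nonneg fun u => by positivity)
      (integral_nonneg fun τ => by positivity) (by linarith) (by linarith)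
  linarith [mul_pos (sub_pos.2 h12) (sub_pos.2 hIJ)]
end

section
/- Let F be a probability distribution function on ℝ and x ∈ ℝ, and suppose L = lim_{z ∈ ℂ⁺ → x} Im m_F(z) exists, where m_F is the Stieltjes transform of F. Then F is differentiable at x with F'(x) = L/π. -/
/-
Writing `z = s + i y`, the imaginary part of the Stieltjes transform is the Poisson integral
`P_y(s) = ∫ y / ((t - s)² + y²) dμ(t)`. Integrating over `s ∈ [α, β]` and using Fubini gives
`∫ (arctan ((β - t) / y) - arctan ((α - t) / y)) dμ(t)`, which tends, as `y → 0⁺`, to `π` times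
the mass of `(α, β)` plus half the masses of the endpoints; so its limit lies between
`π μ (α, β)` and `π μ [α, β]`. Since `P_y(s)` is within `ε` of `L` for all `s` near `x` and all
small `y`, this squeezes `π μ (a, b]` between `(L ∓ ε) (b - a)` for `a < b` near `x`: the
difference quotients of the distribution function tend to `L / π`.
-/

open MeasureTheory Filter ProbabilityTheory Set Real Topology

lemma Real.measurable_sign : Measurable Real.sign :=
  Measurable.ite measurableSet_Iio measurable_const
    (Measurable.ite measurableSet_Ioi measurable_const measurable_const)

lemma integral_div_sub_sq_add_sq (t : ℝ) {y : ℝ} (hy : y ≠ 0) (α β : ℝ) :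
    ∫ s in α..β, y / ((t - s) ^ 2 + y ^ 2) = arctan ((β - t) / y) - arctan ((α - t) / y) := by
  have hpos : ∀ s, 0 < (t - s) ^ 2 + y ^ 2 := fun s => by positivity
  have hcont : Continuous fun s => y / ((t - s) ^ 2 + y ^ 2) :=
    continuous_const.div (by fun_prop) fun s => (hpos s).ne'
  refine intervalIntegral.integral_eq_sub_of_hasDerivAt (f := fun s => arctan ((s - t) / y))
    (fun s _ => ?_) (hcont.intervalIntegrable α β)
  refine (((hasDerivAt_id s).sub_const t).div_const y).arctan.congr_deriv ?_
  simp only [id]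
  field_simp
  ring

lemma abs_arctan_sub_arctan_le (a b : ℝ) : |arctan a - arctan b| ≤ π := by
  rw [abs_le]
  constructor <;> linarith [neg_pi_div_two_lt_arctan a, arctan_lt_pi_div_two a,
    neg_pi_div_two_lt_arctan b, arctan_lt_pi_div_two b]

lemma tendsto_arctan_div_nhdsGT_zero (c : ℝ) :
    Tendsto (fun y => arctan (c / y)) (𝓝[>] 0) (𝓝 (π / 2 * Real.sign c)) := by
  simp_rw [div_eq_mul_inv]
  rcases lt_trichotomy c 0 with hc | rfl | hc
  · rw [Real.sign_of_neg hc, mul_neg_one]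
    exact (tendsto_arctan_atBot.mono_right nhdsWithin_le_nhds).comp
      (tendsto_inv_nhdsGT_zero.const_mul_atTop_of_neg hc)
  · simp
  · rw [Real.sign_of_pos hc, mul_one]
    exact (tendsto_arctan_atTop.mono_right nhdsWithin_le_nhds).comp
      (tendsto_inv_nhdsGT_zero.const_mul_atTop hc)

lemma indicator_Ioo_le_sign_sub_sign {α β : ℝ} (h : α ≤ β) (t : ℝ) :
    (Ioo α β).indicator (fun _ => (2 : ℝ)) t ≤ Real.sign (β - t) - Real.sign (α - t) := by
  unfold Real.sign indicator
  grind

lemma sign_sub_sign_le_indicator_Icc (α β t : ℝ) :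
    Real.sign (β - t) - Real.sign (α - t) ≤ (Icc α β).indicator (fun _ => (2 : ℝ)) t := by
  unfold Real.sign indicator
  grind

lemma Filter.Eventually.exists_Ioo_forall {ι : Type*} {l : Filter ι} {p : ℝ × ι → Prop} {x : ℝ}
    (h : ∀ᶠ q in 𝓝 x ×ˢ l, p q) :
    ∃ c d, x ∈ Ioo c d ∧ ∀ᶠ y in l, ∀ s ∈ Ioo c d, p (s, y) := by
  obtain ⟨pa, hpa, pb, hpb, hp⟩ := eventually_prod_iff.1 h
  obtain ⟨c, d, hx, hcd⟩ := mem_nhds_iff_exists_Ioo_subset.1 hpa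
  exact ⟨c, d, hx, hpb.mono fun y hy s hs => hp (hcd hs) hy⟩

lemma hasDerivAt_of_forall_abs_slope_sub_le {f : ℝ → ℝ} {f' x : ℝ}
    (h : ∀ ε > 0, ∀ᶠ p : ℝ × ℝ in 𝓝 (x, x), p.1 < p.2 → |slope f p.1 p.2 - f'| ≤ ε) :
    HasDerivAt f f' x := by
  rw [hasDerivAt_iff_tendsto_slope, Metric.tendsto_nhds]
  intro ε hε
  have hε2 := h (ε / 2) (half_pos hε)
  have hright := (Continuous.tendsto (f := fun y => (x, y)) (by fun_prop) x).eventually hε2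
  have hleft := (Continuous.tendsto (f := fun y => (y, x)) (by fun_prop) x).eventually hε2
  filter_upwards [nhdsWithin_le_nhds hright, nhdsWithin_le_nhds hleft, self_mem_nhdsWithin]
    with y hr hl (hy : y ≠ x)
  rw [Real.dist_eq]
  rcases hy.lt_or_gt with hy | hy
  · rw [slope_comm]; linarith [hl hy]
  · linarith [hr hy]

lemma slope_cdf (μ : Measure ℝ) [IsProbabilityMeasure μ] {a b : ℝ} (hab : a ≤ b) :
    slope (cdf μ) a b = μ.real (Ioc a b) / (b - a) := by
  rw [slope_def_field, measureReal_def, ← measure_cdf μ, StieltjesFunction.measure_Ioc,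
    ENNReal.toReal_ofReal (sub_nonneg.2 (monotone_cdf μ hab)), measure_cdf]

noncomputable def poissonIntegral (μ : Measure ℝ) (y s : ℝ) : ℝ :=
  ∫ t, y / ((t - s) ^ 2 + y ^ 2) ∂μ

section PoissonIntegral

variable (μ : Measure ℝ) [IsFiniteMeasure μ]

lemma integrable_one_div_ofReal_sub {z : ℂ} (hz : z.im ≠ 0) :
    Integrable (fun t : ℝ => 1 / ((t : ℂ) - z)) μ := by
  have hne : ∀ t : ℝ, (t : ℂ) - z ≠ 0 := fun t h => hz (by simpa using congrArg Complex.im h)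
  refine (integrable_const (1 / |z.im|)).mono' ?_ (Eventually.of_forall fun t => ?_)
  · exact (continuous_const.div (Complex.continuous_ofReal.sub continuous_const)
      hne).aestronglyMeasurable
  · rw [norm_div, norm_one]
    gcongr
    simpa using Complex.abs_im_le_norm ((t : ℂ) - z)

lemma im_integral_one_div_ofReal_sub {z : ℂ} (hz : z.im ≠ 0) :
    (∫ t : ℝ, 1 / ((t : ℂ) - z) ∂μ).im = poissonIntegral μ z.im z.re := by
  rw [← Complex.imCLM_apply,
    ← ContinuousLinearMap.integral_comp_comm _ (integrable_one_div_ofReal_sub μ hz)]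
  refine integral_congr_ae (Eventually.of_forall fun t => ?_)
  simp only [Complex.imCLM_apply, one_div, Complex.inv_im, Complex.normSq_apply, Complex.sub_re,
    Complex.ofReal_re, Complex.sub_im, Complex.ofReal_im]
  ring

lemma tendsto_poissonIntegral_of_tendsto_im {x L : ℝ}
    (hlim : Tendsto (fun z : ℂ => (∫ t : ℝ, 1 / ((t : ℂ) - z) ∂μ).im)
      (𝓝[{z : ℂ | 0 < z.im}] (x : ℂ)) (𝓝 L)) :
    Tendsto (fun q : ℝ × ℝ => poissonIntegral μ q.2 q.1) (𝓝 x ×ˢ 𝓝[>] 0) (𝓝 L) := by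
  have hpos : ∀ᶠ q : ℝ × ℝ in 𝓝 x ×ˢ 𝓝[>] 0, 0 < q.2 := tendsto_snd.eventually self_mem_nhdsWithin
  have hz : Tendsto (fun q : ℝ × ℝ => (q.1 : ℂ) + q.2 * Complex.I) (𝓝 x ×ˢ 𝓝[>] 0)
      (𝓝[{z : ℂ | 0 < z.im}] (x : ℂ)) := by
    refine tendsto_nhdsWithin_iff.2 ⟨?_, hpos.mono fun q hq => by simpa using hq⟩
    have hc : Continuous fun q : ℝ × ℝ => (q.1 : ℂ) + q.2 * Complex.I := by fun_prop
    have hle : 𝓝 x ×ˢ 𝓝[>] (0 : ℝ) ≤ 𝓝 (x, 0) := by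
      rw [nhds_prod_eq]; exact Filter.prod_mono le_rfl nhdsWithin_le_nhds
    simpa using (hc.tendsto (x, 0)).mono_left hle
  refine (hlim.comp hz).congr' (hpos.mono fun q hq => ?_)
  simpa using im_integral_one_div_ofReal_sub μ (z := q.1 + q.2 * Complex.I) (by simpa using hq.ne')

lemma integrable_uncurry_div_sub_sq_add_sq {y : ℝ} (hy : 0 < y) (α β : ℝ) :
    Integrable (Function.uncurry fun s t : ℝ => y / ((t - s) ^ 2 + y ^ 2))
      ((volume.restrict (Ioc α β)).prod μ) := by
  have hpos : ∀ s t : ℝ, 0 < (t - s) ^ 2 + y ^ 2 := fun s t => by positivity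
  refine (integrable_const (1 / y)).mono' ?_ (Eventually.of_forall fun p => ?_)
  · exact (Continuous.aestronglyMeasurable
      (by fun_prop (disch := exact fun p => (hpos p.1 p.2).ne')))
  · rw [Function.uncurry_apply_pair, Real.norm_of_nonneg (div_nonneg hy.le (hpos _ _).le),
      div_le_div_iff₀ (hpos _ _) hy]
    nlinarith [sq_nonneg (p.2 - p.1)]

lemma intervalIntegrable_poissonIntegral {y α β : ℝ} (hy : 0 < y) (hαβ : α ≤ β) :
    IntervalIntegrable (poissonIntegral μ y) volume α β :=
  (intervalIntegrable_iff_integrableOn_Ioc_of_le hαβ).2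
    (integrable_uncurry_div_sub_sq_add_sq μ hy α β).integral_prod_left

lemma integral_poissonIntegral {y α β : ℝ} (hy : 0 < y) (hαβ : α ≤ β) :
    ∫ s in α..β, poissonIntegral μ y s
      = ∫ t, (arctan ((β - t) / y) - arctan ((α - t) / y)) ∂μ := by
  unfold poissonIntegral
  rw [intervalIntegral.integral_of_le hαβ,
    integral_integral_swap (integrable_uncurry_div_sub_sq_add_sq μ hy α β)]
  refine integral_congr_ae (Eventually.of_forall fun t => ?_)
  dsimp only
  rw [← intervalIntegral.integral_of_le hαβ, integral_div_sub_sq_add_sq t hy.ne']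

lemma tendsto_integral_arctan_sub_arctan (α β : ℝ) :
    Tendsto (fun y => ∫ t, (arctan ((β - t) / y) - arctan ((α - t) / y)) ∂μ) (𝓝[>] 0)
      (𝓝 (∫ t, π / 2 * (Real.sign (β - t) - Real.sign (α - t)) ∂μ)) := by
  refine tendsto_integral_filter_of_dominated_convergence (fun _ => π)
    (Eventually.of_forall fun y => ?_)
    (Eventually.of_forall fun y => Eventually.of_forall fun t => ?_) (integrable_const π)
    (Eventually.of_forall fun t => ?_)
  · exact Continuous.aestronglyMeasurable (by fun_prop)
  · exact abs_arctan_sub_arctan_le _ _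
  · simp_rw [mul_sub]
    exact (tendsto_arctan_div_nhdsGT_zero _).sub (tendsto_arctan_div_nhdsGT_zero _)

lemma integrable_sign_sub_sign (α β : ℝ) :
    Integrable (fun t => π / 2 * (Real.sign (β - t) - Real.sign (α - t))) μ := by
  have hsign : ∀ c : ℝ, Integrable (fun t => Real.sign (c - t)) μ := fun c =>
    .of_bound (Real.measurable_sign.comp (measurable_const.sub measurable_id)).aestronglyMeasurable
      1 (Eventually.of_forall fun t => by
        rcases Real.sign_apply_eq (c - t) with h | h | h <;> simp [h])
  exact ((hsign β).sub (hsign α)).const_mul _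

lemma pi_mul_measureReal_Ioo_le_integral_sign_sub_sign {α β : ℝ} (h : α ≤ β) :
    π * μ.real (Ioo α β) ≤ ∫ t, π / 2 * (Real.sign (β - t) - Real.sign (α - t)) ∂μ :=
  calc π * μ.real (Ioo α β) = ∫ t, π / 2 * (Ioo α β).indicator (fun _ => (2 : ℝ)) t ∂μ := by
        rw [integral_const_mul, integral_indicator_const _ measurableSet_Ioo, smul_eq_mul]; ring
    _ ≤ _ := integral_mono (((integrable_const _).indicator measurableSet_Ioo).const_mul _)
        (integrable_sign_sub_sign μ α β) fun t =>
          mul_le_mul_of_nonneg_left (indicator_Ioo_le_sign_sub_sign h t) (by positivity)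

lemma integral_sign_sub_sign_le_pi_mul_measureReal_Icc (α β : ℝ) :
    ∫ t, π / 2 * (Real.sign (β - t) - Real.sign (α - t)) ∂μ ≤ π * μ.real (Icc α β) :=
  calc _ ≤ ∫ t, π / 2 * (Icc α β).indicator (fun _ => (2 : ℝ)) t ∂μ :=
        integral_mono (integrable_sign_sub_sign μ α β)
          (((integrable_const _).indicator measurableSet_Icc).const_mul _) fun t =>
            mul_le_mul_of_nonneg_left (sign_sub_sign_le_indicator_Icc α β t) (by positivity)
    _ = π * μ.real (Icc α β) := by
        rw [integral_const_mul, integral_indicator_const _ measurableSet_Icc, smul_eq_mul]; ring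

lemma tendsto_integral_poissonIntegral {α β : ℝ} (hαβ : α ≤ β) :
    Tendsto (fun y => ∫ s in α..β, poissonIntegral μ y s) (𝓝[>] 0)
      (𝓝 (∫ t, π / 2 * (Real.sign (β - t) - Real.sign (α - t)) ∂μ)) :=
  (tendsto_integral_arctan_sub_arctan μ α β).congr'
    (eventually_nhdsWithin_of_forall fun _ hy => (integral_poissonIntegral μ hy hαβ).symm)

lemma mul_sub_le_pi_mul_measureReal_Icc {α β m : ℝ} (hαβ : α ≤ β)
    (h : ∀ᶠ y in 𝓝[>] 0, ∀ s ∈ Icc α β, m ≤ poissonIntegral μ y s) :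
    m * (β - α) ≤ π * μ.real (Icc α β) := by
  refine (ge_of_tendsto (tendsto_integral_poissonIntegral μ hαβ) ?_).trans
    (integral_sign_sub_sign_le_pi_mul_measureReal_Icc μ α β)
  filter_upwards [h, self_mem_nhdsWithin] with y hy (hy0 : 0 < y)
  simpa [mul_comm] using intervalIntegral.integral_mono_on hαβ intervalIntegrable_const
    (intervalIntegrable_poissonIntegral μ hy0 hαβ) hy

lemma pi_mul_measureReal_Ioo_le_mul_sub {α β M : ℝ} (hαβ : α ≤ β)
    (h : ∀ᶠ y in 𝓝[>] 0, ∀ s ∈ Icc α β, poissonIntegral μ y s ≤ M) :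
    π * μ.real (Ioo α β) ≤ M * (β - α) := by
  refine (pi_mul_measureReal_Ioo_le_integral_sign_sub_sign μ hαβ).trans
    (le_of_tendsto (tendsto_integral_poissonIntegral μ hαβ) ?_)
  filter_upwards [h, self_mem_nhdsWithin] with y hy (hy0 : 0 < y)
  simpa [mul_comm] using intervalIntegral.integral_mono_on hαβ
    (intervalIntegrable_poissonIntegral μ hy0 hαβ) intervalIntegrable_const hy

lemma mul_sub_le_pi_mul_measureReal_Ioc {a b m : ℝ} (hab : a < b)
    (h : ∀ᶠ y in 𝓝[>] 0, ∀ s ∈ Ioc a b, m ≤ poissonIntegral μ y s) :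
    m * (b - a) ≤ π * μ.real (Ioc a b) := by
  have hcont : Tendsto (fun a' => m * (b - a')) (𝓝[>] a) (𝓝 (m * (b - a))) :=
    ((continuous_const.mul (continuous_const.sub continuous_id)).tendsto a).mono_left
      nhdsWithin_le_nhds
  refine le_of_tendsto hcont ?_
  filter_upwards [Ioo_mem_nhdsGT hab] with a' ha'
  calc m * (b - a') ≤ π * μ.real (Icc a' b) :=
        mul_sub_le_pi_mul_measureReal_Icc μ ha'.2.le
          (h.mono fun y hy s hs => hy s ⟨ha'.1.trans_le hs.1, hs.2⟩)
    _ ≤ π * μ.real (Ioc a b) := by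
        gcongr
        exacts [measure_ne_top μ _, ha'.1]

lemma pi_mul_measureReal_Ioc_le_mul_sub {a b d M : ℝ} (hab : a ≤ b) (hbd : b < d)
    (h : ∀ᶠ y in 𝓝[>] 0, ∀ s ∈ Ico a d, poissonIntegral μ y s ≤ M) :
    π * μ.real (Ioc a b) ≤ M * (b - a) := by
  have hcont : Tendsto (fun b' => M * (b' - a)) (𝓝[>] b) (𝓝 (M * (b - a))) :=
    ((continuous_const.mul (continuous_id.sub continuous_const)).tendsto b).mono_left
      nhdsWithin_le_nhds
  refine ge_of_tendsto hcont ?_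
  filter_upwards [Ioo_mem_nhdsGT hbd] with b' hb'
  calc π * μ.real (Ioc a b) ≤ π * μ.real (Ioo a b') := by
        gcongr
        exacts [measure_ne_top μ _, hb'.1]
    _ ≤ M * (b' - a) :=
        pi_mul_measureReal_Ioo_le_mul_sub μ (hab.trans hb'.1.le)
          (h.mono fun y hy s hs => hy s ⟨hs.1, hs.2.trans_lt hb'.2⟩)

end PoissonIntegral

theorem silverstein_choi_derivative
    (μ : Measure ℝ) [IsProbabilityMeasure μ] (x : ℝ) (L : ℝ)
    (hlim : Tendsto (fun z : ℂ => (∫ t : ℝ, 1 / ((t : ℂ) - z) ∂μ).im)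
      (nhdsWithin (x : ℂ) {z : ℂ | 0 < z.im}) (nhds L)) :
    HasDerivAt (fun s : ℝ => (ProbabilityTheory.cdf μ) s) (L / Real.pi) x := by
  refine hasDerivAt_of_forall_abs_slope_sub_le fun ε hε => ?_
  have hπε : 0 < π * ε := mul_pos pi_pos hε
  obtain ⟨c, d, ⟨hcx, hxd⟩, hP⟩ :=
    ((tendsto_poissonIntegral_of_tendsto_im μ hlim).eventually
      (Icc_mem_nhds (sub_lt_self L hπε) (lt_add_of_pos_right L hπε))).exists_Ioo_forall
  filter_upwards [prod_mem_nhds (Ioo_mem_nhds hcx hxd) (Ioo_mem_nhds hcx hxd)]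
    with ⟨a, b⟩ ⟨ha, hb⟩ (hab : a < b)
  have hlower := mul_sub_le_pi_mul_measureReal_Ioc μ hab
    (hP.mono fun y hy s hs => (hy s ⟨ha.1.trans hs.1, hs.2.trans_lt hb.2⟩).1)
  have hupper := pi_mul_measureReal_Ioc_le_mul_sub μ hab.le hb.2
    (hP.mono fun y hy s hs => (hy s ⟨ha.1.trans_le hs.1, hs.2⟩).2)
  have hba : 0 < b - a := sub_pos.2 hab
  rw [slope_cdf μ hab.le, div_sub_div _ _ hba.ne' pi_ne_zero, abs_div,
    abs_of_pos (mul_pos hba pi_pos), div_le_iff₀ (mul_pos hba pi_pos), abs_le]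
  constructor <;> nlinarith
end
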